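/- For all real y ≤ 1, exp(y) ≤ 1 + y + (e - 2) * y^2. -/

import Mathlib

/-!
For `|y| ≤ 1` compare the exponential series termwise: `exp y - 1 - y = ∑ yⁿ⁺²/(n+2)!`
and `|y|ⁿ⁺² ≤ y²`, so the tail is at most `y² ∑ 1/(n+2)! = y² (e - 2)`.
For `y < -1` the left side is below `e⁻¹ < 1/2`, while the right side is at least
`1 + y + y²/2 ≥ 1/2` because `e - 2 > 1/2`.
-/

open Real Nat

namespace Real

lemma hasSum_exp_sub_one_sub (x : ℝ) :
    HasSum (fun n : ℕ => x ^ (n + 2) / (n + 2)!) (exp x - 1 - x) := by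
  have h := (hasSum_nat_add_iff' 2).mpr (NormedSpace.expSeries_div_hasSum_exp x)
  simpa [← exp_eq_exp_ℝ, Finset.sum_range_succ, sub_sub] using h

lemma exp_sub_one_sub_le_sq_mul {x : ℝ} (hx : |x| ≤ 1) :
    exp x - 1 - x ≤ x ^ 2 * (exp 1 - 2) := by
  refine (hasSum_le (fun n => ?_) (hasSum_exp_sub_one_sub x)
    ((hasSum_exp_sub_one_sub 1).mul_left (x ^ 2))).trans_eq (by ring)
  rw [one_pow, mul_one_div]
  refine div_le_div_of_nonneg_right ?_ (by positivity)
  calc x ^ (n + 2) ≤ |x| ^ (n + 2) := (le_abs_self _).trans (abs_pow x _).le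
    _ ≤ |x| ^ 2 := pow_le_pow_of_le_one (abs_nonneg x) hx (by omega)
    _ = x ^ 2 := sq_abs x

lemma exp_lt_half_of_le_neg_one {y : ℝ} (hy : y ≤ -1) : exp y < 1 / 2 :=
  calc exp y ≤ exp (-1) := exp_le_exp.2 hy
    _ = (exp 1)⁻¹ := exp_neg 1
    _ < 1 / 2 := by rw [one_div]; exact inv_strictAnti₀ two_pos exp_one_gt_two

end Real

theorem exp_le_quadratic (y : ℝ) (hy : y ≤ 1) :
    Real.exp y ≤ 1 + y + (Real.exp 1 - 2) * y ^ 2 := by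
  rcases le_or_gt (-1) y with hy₁ | hy₁
  · have := exp_sub_one_sub_le_sq_mul (abs_le.2 ⟨hy₁, hy⟩)
    linarith
  · have he : 5 / 2 < exp 1 := lt_trans (by norm_num) exp_one_gt_d9
    have := exp_lt_half_of_le_neg_one hy₁.le
    nlinarith [sq_nonneg (y + 1)]
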